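/- arXiv:2409.02047 — 6 statements merged into one kernel-verified Lean document; each statement's English description precedes it below -/
import Mathlib

section
/- For every integer l ≥ 3, F_l - 1 divides the product F_{l-2} * F_{l-1} * F_{l+1} * F_{l+2}. -/
lemma cassini (m : ℕ) :
    (Nat.fib (m+1) : ℤ)^2 - Nat.fib m * Nat.fib (m+2) = (-1)^m := by
  induction m with
  | zero => simp
  | succ n ih =>
    have h1 : (Nat.fib (n+3) : ℤ) = Nat.fib (n+1) + Nat.fib (n+2) := by
      rw [show n+3 = (n+1)+2 from rfl, Nat.fib_add_two]; push_cast; ring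
    have h2 : (Nat.fib (n+2) : ℤ) = Nat.fib n + Nat.fib (n+1) := by
      rw [Nat.fib_add_two]; push_cast; ring
    simp only [show n+1+1 = n+2 from rfl, show n+1+2 = n+3 from rfl]
    rw [h1]
    have hp : ((-1:ℤ))^(n+1) = -(-1)^n := by ring
    rw [hp]
    nlinarith [ih, h2]

theorem fib_sub_one_dvd_prod (l : ℕ) (hl : 3 ≤ l) :
    (Nat.fib l - 1) ∣ Nat.fib (l - 2) * Nat.fib (l - 1) * Nat.fib (l + 1) * Nat.fib (l + 2) := by
  obtain ⟨k, rfl⟩ : ∃ k, l = k + 3 := ⟨l - 3, by omega⟩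
  have hfib : 1 ≤ Nat.fib (k+3) := Nat.fib_pos.mpr (by omega)
  rw [← Int.natCast_dvd_natCast]
  push_cast [Nat.cast_sub hfib]
  have c1 := cassini (k+2)  -- F_{k+3}^2 - F_{k+2}F_{k+4} = (-1)^{k+2}
  have c2 := cassini (k+1)
  have c3 := cassini (k+3)
  have e1 : (Nat.fib (k+5) : ℤ) = Nat.fib (k+3) + Nat.fib (k+4) := by
    rw [show k+5 = (k+3)+2 from rfl, Nat.fib_add_two]; push_cast; ring
  have e2 : (Nat.fib (k+4) : ℤ) = Nat.fib (k+2) + Nat.fib (k+3) := by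
    rw [show k+4 = (k+2)+2 from rfl, Nat.fib_add_two]; push_cast; ring
  have e3 : (Nat.fib (k+3) : ℤ) = Nat.fib (k+1) + Nat.fib (k+2) := by
    rw [Nat.fib_add_two]; push_cast; ring
  simp only [show k+3+1 = k+4 from rfl, show k+3+2 = k+5 from rfl,
    show k+2+1 = k+3 from rfl, show k+2+2 = k+4 from rfl,
    show k+1+1 = k+2 from rfl, show k+1+2 = k+3 from rfl] at *
  rcases Nat.even_or_odd k with hk | hk
  · have hp : ((-1:ℤ))^(k+2) = 1 :=
      Even.neg_one_pow (hk.add (by norm_num))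
    have key : (Nat.fib (k+2) : ℤ) * Nat.fib (k+4) = Nat.fib (k+3)^2 - 1 := by
      rw [hp] at c1; linarith
    exact ⟨(Nat.fib (k+1) : ℤ) * ((Nat.fib (k+3):ℤ) + 1) * Nat.fib (k+5), by
      linear_combination (Nat.fib (k+1):ℤ) * Nat.fib (k+5) * key⟩
  · have hp2 : ((-1:ℤ))^(k+1) = 1 :=
      Even.neg_one_pow (hk.add_odd (by norm_num))
    rw [hp2] at c2
    have key : (Nat.fib (k+1) : ℤ) * Nat.fib (k+5) = Nat.fib (k+3)^2 - 1 := by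
      nlinarith [c2, e1, e2, e3]
    exact ⟨(Nat.fib (k+2) : ℤ) * ((Nat.fib (k+3):ℤ) + 1) * Nat.fib (k+4), by
      linear_combination (Nat.fib (k+2):ℤ) * Nat.fib (k+4) * key⟩
end

section
/- Let k ≥ 2, l ≥ 3, and n be positive integers such that F_l^k exactly divides F_n (i.e., F_l^k ∣ F_n but F_l^(k+1) ∤ F_n) and l is not congruent to 3 modulo 6. Then F_l^(k-1) exactly divides n/l. -/
/-!
Powers of the Fibonacci matrix give `F_{lm} = ∑ᵢ C(m,i) F_l^i F_{l-1}^(m-i) F_i`. Let `p` be a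
prime dividing `F_l`. Since `F_{l-1}` is coprime to `F_l`, the term `i = 1`, namely
`m F_l F_{l-1}^(m-1)`, has `p`-adic valuation `v_p(F_l) + v_p(m)`, while every term with `i ≥ 2`
is divisible by a strictly higher power of `p` (from `i C(m,i) = m C(m-1,i-1)` and
`p^{v_p(i)} ≤ i`), except when `p = 2` and `v_2(F_l) = 1`. That case cannot occur when
`l ≢ 3 (mod 6)`: `2 ∣ F_l` forces `3 ∣ l`, hence `6 ∣ l` and `8 = F_6 ∣ F_l`. So
`v_p(F_{lm}) = v_p(F_l) + v_p(m)` for every `p ∣ F_l`, that is,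
`F_l^(j+1) ∣ F_{lm} ↔ F_l^j ∣ m`.
-/

open Finset

namespace Nat

def fibMatrix : Matrix (Fin 2) (Fin 2) ℕ := !![1, 1; 1, 0]

theorem fibMatrix_pow_succ (n : ℕ) :
    fibMatrix ^ (n + 1) = !![fib (n + 2), fib (n + 1); fib (n + 1), fib n] := by
  induction n with
  | zero => simp [fibMatrix]
  | succ n ih =>
    rw [pow_succ, ih]
    ext i j
    fin_cases i <;> fin_cases j <;> simp [fibMatrix, fib_add_two, add_comm, add_left_comm]

theorem fibMatrix_pow_apply_zero_one (n : ℕ) : (fibMatrix ^ n) 0 1 = fib n := by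
  cases n with
  | zero => simp
  | succ n => simp [fibMatrix_pow_succ]

theorem fibMatrix_pow_succ_eq_smul_add (n : ℕ) :
    fibMatrix ^ (n + 1) = fib (n + 1) • fibMatrix + fib n • 1 := by
  rw [fibMatrix_pow_succ]
  ext i j
  fin_cases i <;> fin_cases j <;> simp [fibMatrix, fib_add_two, Matrix.natCast_apply, add_comm]

theorem fib_mul_eq_sum {l : ℕ} (hl : l ≠ 0) (m : ℕ) :
    fib (l * m) =
      ∑ i ∈ range (m + 1), m.choose i * fib l ^ i * fib (l - 1) ^ (m - i) * fib i := by
  obtain ⟨l, rfl⟩ := exists_eq_add_one_of_ne_zero hl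
  rw [Nat.add_sub_cancel]
  have hcomm : Commute (fib (l + 1) • fibMatrix) (fib l • 1) := (Commute.one_right _).smul_right _
  rw [← fibMatrix_pow_apply_zero_one, pow_mul, fibMatrix_pow_succ_eq_smul_add, hcomm.add_pow,
    Matrix.sum_apply]
  refine sum_congr rfl fun i _ => ?_
  rw [smul_pow, smul_pow, one_pow, mul_smul_one, ← Nat.smul_one_eq_cast, mul_smul_one]
  simp only [Matrix.smul_apply, smul_eq_mul, fibMatrix_pow_apply_zero_one]
  ring

theorem fib_mul_eq_add_sum {l m : ℕ} (hl : l ≠ 0) (hm : m ≠ 0) :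
    fib (l * m) = m * fib l * fib (l - 1) ^ (m - 1) +
      ∑ i ∈ Ico 2 (m + 1), m.choose i * fib l ^ i * fib (l - 1) ^ (m - i) * fib i := by
  rw [fib_mul_eq_sum hl, range_eq_Ico, sum_eq_sum_Ico_succ_bot (by omega),
    sum_eq_sum_Ico_succ_bot (by omega)]
  simp

theorem add_add_one_le_mul_of_pow_le {p c e i : ℕ} (hc : 2 ≤ c * (p - 1)) (hpe : p ^ e ≤ i)
    (hi : 2 ≤ i) : c + e + 1 ≤ c * i := by
  have hp : p - 1 + 1 = p := by
    rcases p with _ | p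
    · simp at hc
    · simp
  have hbernoulli : 1 + e * (p - 1) ≤ p ^ e := by
    have := one_add_le_pow_of_two_add_nonneg (zero_le (2 + (p - 1))) e
    rw [add_comm 1 (p - 1), hp, Nat.cast_id] at this
    linarith
  rcases Nat.eq_zero_or_pos e with rfl | he <;> nlinarith

theorem pow_dvd_choose_mul_ordProj {p m ν i : ℕ} (hp : p.Prime) (hν : p ^ ν ∣ m) (hi : i ≠ 0) :
    p ^ ν ∣ m.choose i * ordProj[p] i := by
  have hcop : Coprime (p ^ ν) (ordCompl[p] i) := (coprime_ordCompl hp hi).pow_left ν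
  refine hcop.dvd_of_dvd_mul_right ?_
  rw [mul_assoc, ordProj_mul_ordCompl_eq_self]
  obtain ⟨j, rfl⟩ := exists_eq_add_one_of_ne_zero hi
  rcases m with _ | m
  · simp
  · rw [← add_one_mul_choose_eq]
    exact hν.mul_right _

theorem pow_dvd_choose_mul_pow {p q m c ν i : ℕ} (hp : p.Prime) (hc : 2 ≤ c * (p - 1))
    (hq : p ^ c ∣ q) (hν : p ^ ν ∣ m) (hi : 2 ≤ i) : p ^ (c + ν + 1) ∣ m.choose i * q ^ i := by
  set e := i.factorization p
  have hexp : c + e + 1 ≤ c * i := add_add_one_le_mul_of_pow_le hc (ordProj_le p (by omega)) hi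
  have h : p ^ (c + ν + 1) * p ^ e ∣ m.choose i * q ^ i * p ^ e :=
    calc p ^ (c + ν + 1) * p ^ e ∣ p ^ ν * p ^ (c * i) := by
          rw [← pow_add, ← pow_add]
          exact pow_dvd_pow p (by omega)
      _ ∣ (m.choose i * p ^ e) * q ^ i :=
          mul_dvd_mul (pow_dvd_choose_mul_ordProj hp hν (by omega))
            (pow_mul p c i ▸ pow_dvd_pow_of_dvd hq i)
      _ = m.choose i * q ^ i * p ^ e := by ring
  exact Nat.dvd_of_mul_dvd_mul_right (pow_pos hp.pos e) h

theorem factorization_add_eq_of_pow_dvd {p a b : ℕ} (hp : p.Prime) (ha : a ≠ 0)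
    (hb : p ^ (a.factorization p + 1) ∣ b) : (a + b).factorization p = a.factorization p := by
  have hab : a + b ≠ 0 := by omega
  apply le_antisymm
  · by_contra! h
    have hdvd : p ^ (a.factorization p + 1) ∣ a + b := (hp.pow_dvd_iff_le_factorization hab).2 h
    exact pow_succ_factorization_not_dvd ha hp ((Nat.dvd_add_left hb).1 hdvd)
  · rw [← hp.pow_dvd_iff_le_factorization hab]
    exact dvd_add (ordProj_dvd a p) ((pow_dvd_pow p (by omega)).trans hb)

theorem factorization_fib_mul {p l m : ℕ} (hp : p.Prime) (hl : l ≠ 0) (hm : m ≠ 0)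
    (hpl : p ∣ fib l) (h2 : p ≠ 2 ∨ 2 ≤ (fib l).factorization p) :
    (fib (l * m)).factorization p = (fib l).factorization p + m.factorization p := by
  set c := (fib l).factorization p
  have hfib : fib l ≠ 0 := fib_eq_zero.not.2 hl
  have hr : ¬ p ∣ fib (l - 1) := by
    intro hpr
    have hcop : Coprime (fib (l - 1)) (fib l) := by
      simpa [Nat.sub_add_cancel (one_le_iff_ne_zero.2 hl)] using fib_coprime_fib_succ (l - 1)
    exact hp.one_lt.ne' (eq_one_of_dvd_coprimes hcop hpr hpl)
  have hc : 2 ≤ c * (p - 1) := by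
    have hc1 : 1 ≤ c := hp.factorization_pos_of_dvd hfib hpl
    rcases h2 with hp2 | hc2
    · have : 2 ≤ p - 1 := by have := hp.two_le; omega
      nlinarith
    · have : 1 ≤ p - 1 := by have := hp.two_le; omega
      nlinarith
  have hr0 : fib (l - 1) ≠ 0 := fun h => hr (h ▸ dvd_zero p)
  have hlead : (m * fib l * fib (l - 1) ^ (m - 1)).factorization p = c + m.factorization p := by
    simp [factorization_mul, hm, hfib, hr0, factorization_eq_zero_of_not_dvd hr, c, add_comm]
  rw [fib_mul_eq_add_sum hl hm, ← hlead]
  refine factorization_add_eq_of_pow_dvd hp (by simp [hm, hfib, hr0]) ?_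
  rw [hlead]
  exact dvd_sum fun i hi => ((pow_dvd_choose_mul_pow hp hc (ordProj_dvd _ _) (ordProj_dvd _ _)
    (mem_Ico.1 hi).1).mul_right _).mul_right _

theorem pow_succ_dvd_iff_of_factorization_eq {q a b : ℕ} (hq : q ≠ 0) (ha : a ≠ 0) (hb : b ≠ 0)
    (h : ∀ p, p.Prime → p ∣ q → b.factorization p = q.factorization p + a.factorization p)
    (j : ℕ) : q ^ (j + 1) ∣ b ↔ q ^ j ∣ a := by
  rw [← factorization_prime_le_iff_dvd (pow_ne_zero _ hq) hb,
    ← factorization_prime_le_iff_dvd (pow_ne_zero _ hq) ha]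
  refine forall₂_congr fun p hp => ?_
  simp only [factorization_pow, Finsupp.smul_apply, smul_eq_mul]
  by_cases hpq : p ∣ q
  · rw [h p hp hpq, add_mul, one_mul]
    omega
  · simp [factorization_eq_zero_of_not_dvd hpq]

theorem two_dvd_fib_iff {n : ℕ} : 2 ∣ fib n ↔ 3 ∣ n := by
  refine ⟨fun h => ?_, fib_dvd 3 n⟩
  rcases coprime_or_dvd_of_prime prime_three n with hcop | h3
  · have := fib_gcd 3 n
    rw [hcop.gcd_eq_one, Nat.gcd_eq_left (show fib 3 ∣ fib n from h)] at this
    simp [fib_add_two] at this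
  · exact h3

theorem dvd_of_fib_dvd_fib {m n : ℕ} (hm : 3 ≤ m) (h : fib m ∣ fib n) : m ∣ n := by
  have hfib : fib (m.gcd n) = fib m := by rw [fib_gcd, Nat.gcd_eq_left h]
  have hg : 2 < m.gcd n := by
    by_contra! hg
    have h1 : fib (m.gcd n) ≤ fib 2 := fib_mono hg
    have h2 : fib 3 ≤ fib m := fib_mono hm
    simp only [hfib, fib_two] at h1
    norm_num [fib_add_two] at h2
    omega
  have : m.gcd n = m := fib_strictMonoOn.injOn (by simp; omega) (by simp; omega) hfib
  exact this ▸ Nat.gcd_dvd_right m n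

theorem fib_pow_succ_dvd_fib_mul_iff {l : ℕ} (hl : l ≠ 0) (hl6 : l % 6 ≠ 3) (m j : ℕ) :
    fib l ^ (j + 1) ∣ fib (l * m) ↔ fib l ^ j ∣ m := by
  rcases eq_or_ne m 0 with rfl | hm
  · simp
  have hfib : fib l ≠ 0 := fib_eq_zero.not.2 hl
  refine pow_succ_dvd_iff_of_factorization_eq hfib hm (fib_eq_zero.not.2 (by positivity))
    (fun p hp hpl => factorization_fib_mul hp hl hm hpl ?_) j
  rcases eq_or_ne p 2 with rfl | hp2
  · have h6 : 6 ∣ l := by have := two_dvd_fib_iff.1 hpl; omega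
    have h8 : 2 ^ 3 ∣ fib l := fib_dvd 6 l h6
    have := (prime_two.pow_dvd_iff_le_factorization hfib).1 h8
    omega
  · exact Or.inl hp2

end Nat

theorem exact_div_fib_of_not_three_mod_six_general (k l n : ℕ)
    (hk : 2 ≤ k) (hl : 3 ≤ l)
    (hdvd : Nat.fib l ^ k ∣ Nat.fib n) (hndvd : ¬ Nat.fib l ^ (k + 1) ∣ Nat.fib n)
    (hmod : l % 6 ≠ 3) :
    Nat.fib l ^ (k - 1) ∣ n / l ∧ ¬ Nat.fib l ^ k ∣ n / l := by
  obtain ⟨m, rfl⟩ : l ∣ n := Nat.dvd_of_fib_dvd_fib hl ((dvd_pow_self _ (by omega)).trans hdvd)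
  obtain ⟨j, rfl⟩ : ∃ j, k = j + 1 := ⟨k - 1, by omega⟩
  rw [Nat.mul_div_cancel_left m (by omega), Nat.add_sub_cancel]
  have hiff := Nat.fib_pow_succ_dvd_fib_mul_iff (by omega) hmod m
  exact ⟨(hiff j).1 hdvd, fun h => hndvd ((hiff (j + 1)).2 h)⟩

theorem exact_div_fib_of_not_three_mod_six (k l n : ℕ)
    (hk : 2 ≤ k) (hl : 3 ≤ l) (hn : 1 ≤ n)
    (hdvd : Nat.fib l ^ k ∣ Nat.fib n) (hndvd : ¬ Nat.fib l ^ (k + 1) ∣ Nat.fib n)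
    (hmod : l % 6 ≠ 3) :
    Nat.fib l ^ (k - 1) ∣ n / l ∧ ¬ Nat.fib l ^ k ∣ n / l :=
  exact_div_fib_of_not_three_mod_six_general k l n hk hl hdvd hndvd hmod
end

section
/- Suppose positive integers n, l, k, m with l ≥ 3 satisfy F_n = F_l^k * (F_l^m - 1). Then (k+m)(l-2) ≤ n ≤ 2 + (k+m)(l-1). -/
open Nat

lemma fib_mul_fib_le (a b : ℕ) : fib (a+1) * fib (b+1) ≤ fib (a+b+1) := by
  rw [Nat.fib_add]
  exact Nat.le_add_left _ _

lemma fib_add_le_mul (a b : ℕ) : fib (a+b+2) ≤ fib (a+2) * fib (b+2) := by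
  have h := Nat.fib_add (a+1) (b+1)
  have e : a + 1 + (b + 1) + 1 = a + b + 3 := by ring
  rw [e] at h
  have h1 : fib (a+1) * fib (b+1) ≤ fib (a+b+1) := fib_mul_fib_le a b
  have h2 : fib (a+b+3) = fib (a+b+1) + fib (a+b+2) := Nat.fib_add_two
  have e2 : a + 1 + 1 = a + 2 := rfl
  have e3 : b + 1 + 1 = b + 2 := rfl
  rw [e2, e3] at h
  omega

lemma fib_pow_le (l : ℕ) (hl : 3 ≤ l) : ∀ s, fib l ^ s ≤ fib (s * (l-1) + 1) := by
  intro s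
  induction s with
  | zero => simp
  | succ s ih =>
    have key : fib l * fib (s*(l-1)+1) ≤ fib ((s+1)*(l-1)+1) := by
      have h := fib_mul_fib_le (l-1) (s*(l-1))
      have e1 : l - 1 + 1 = l := by omega
      have e2 : l - 1 + s*(l-1) + 1 = (s+1)*(l-1)+1 := by ring
      rw [e1, e2] at h
      exact h
    calc fib l ^ (s+1) = fib l * fib l ^ s := by ring
    _ ≤ fib l * fib (s*(l-1)+1) := Nat.mul_le_mul_left _ ih
    _ ≤ fib ((s+1)*(l-1)+1) := key

lemma le_fib_pow_mul (l : ℕ) (hl : 3 ≤ l) (c : ℕ) :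
    ∀ s, fib (s * (l-2) + c + 2) ≤ fib l ^ s * fib (c + 2) := by
  intro s
  induction s with
  | zero => simp
  | succ s ih =>
    have key : fib ((s+1)*(l-2)+c+2) ≤ fib l * fib (s*(l-2)+c+2) := by
      have h := fib_add_le_mul (l-2) (s*(l-2)+c)
      have e1 : l - 2 + 2 = l := by omega
      have e2 : l - 2 + (s*(l-2)+c) + 2 = (s+1)*(l-2)+c+2 := by ring
      rw [e1, e2] at h
      exact h
    calc fib ((s+1)*(l-2)+c+2) ≤ fib l * fib (s*(l-2)+c+2) := key
    _ ≤ fib l * (fib l ^ s * fib (c+2)) := Nat.mul_le_mul_left _ ih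
    _ = fib l ^ (s+1) * fib (c+2) := by ring

theorem n_bounds_of_fib_eq (n l k m : ℕ)
    (hn : 1 ≤ n) (hl : 3 ≤ l) (hk : 1 ≤ k) (hm : 1 ≤ m)
    (heq : Nat.fib n = Nat.fib l ^ k * (Nat.fib l ^ m - 1)) :
    (k + m) * (l - 2) ≤ n ∧ n ≤ 2 + (k + m) * (l - 1) := by
  set t := k + m with ht
  have hfl : 2 ≤ fib l := by
    calc 2 = fib 3 := rfl
    _ ≤ fib l := Nat.fib_mono hl
  have hflm : 2 ≤ fib l ^ m := le_trans hfl (Nat.le_self_pow (by omega) _)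
  have hflk : 1 ≤ fib l ^ k := Nat.one_le_pow _ _ (by omega)
  -- lower bound on fib n
  have hlow : fib l ^ (t-1) * (fib l - 1) ≤ fib n := by
    have hp : 1 ≤ fib l ^ (m-1) := Nat.one_le_pow _ _ (by omega)
    have hq : fib l ^ (m-1) * fib l = fib l ^ m := by
      rw [← pow_succ]; congr 1; omega
    have h1 : fib l ^ (m-1) * (fib l - 1) ≤ fib l ^ m - 1 := by
      have hr : fib l ^ (m-1) * (fib l - 1) = fib l ^ m - fib l ^ (m-1) := by
        rw [Nat.mul_sub, hq]; ring_nf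
      omega
    calc fib l ^ (t-1) * (fib l - 1) = fib l ^ k * (fib l ^ (m-1) * (fib l - 1)) := by
          rw [← mul_assoc, ← pow_add]; congr 2; omega
    _ ≤ fib l ^ k * (fib l ^ m - 1) := Nat.mul_le_mul_left _ h1
    _ = fib n := heq.symm
  have hfc : fib ((l-4) + 2) ≤ fib l - 1 := by
    rcases Nat.lt_or_ge l 4 with h4 | h4
    · interval_cases l
      decide
    · have e0 : l - 4 + 2 = l - 2 := by omega
      have e : fib (l-2) + fib (l-2+1) = fib (l-2+2) := (Nat.fib_add_two).symm
      have e2 : l - 2 + 2 = l := by omega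
      rw [e2] at e
      have h1 : 1 ≤ fib (l-2+1) := Nat.fib_pos.mpr (by omega)
      rw [e0]
      omega
  have hfibn_low : fib (t * (l-2)) ≤ fib n := by
    have h1 : fib ((t-1) * (l-2) + (l-4) + 2) ≤ fib l ^ (t-1) * fib ((l-4)+2) :=
      le_fib_pow_mul l hl (l-4) (t-1)
    have h2 : fib l ^ (t-1) * fib ((l-4)+2) ≤ fib l ^ (t-1) * (fib l - 1) :=
      Nat.mul_le_mul_left _ hfc
    have h3 : t * (l-2) ≤ (t-1) * (l-2) + (l-4) + 2 := by
      have ht1 : t - 1 + 1 = t := by omega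
      have : t * (l-2) = (t-1)*(l-2) + (l-2) := by
        conv_lhs => rw [← ht1]
        ring
      omega
    exact le_trans (Nat.fib_mono h3) (le_trans h1 (le_trans h2 hlow))
  -- lower bound on n
  have hfn2 : 2 ≤ fib n := by
    rw [heq]
    calc 2 = 2 * 1 := rfl
    _ ≤ fib l ^ k * (fib l ^ m - 1) :=
      Nat.mul_le_mul (le_trans hfl (Nat.le_self_pow (by omega) _)) (by omega)
  have hnlow : t * (l-2) ≤ n := by
    by_contra hcon
    push_neg at hcon
    have hn2 : 2 ≤ n := by
      by_contra h
      push_neg at h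
      have : n = 1 := by omega
      rw [this] at hfn2
      exact absurd hfn2 (by decide)
    have hmono : fib (n+1) ≤ fib (t*(l-2)) := Nat.fib_mono (by omega)
    have hlt := Nat.fib_lt_fib_succ hn2
    omega
  -- upper bound
  have hup : fib n < fib (t * (l-1) + 1) := by
    have h1 : fib n < fib l ^ t := by
      rw [heq]
      have hlt : fib l ^ k * (fib l ^ m - 1) < fib l ^ k * fib l ^ m :=
        Nat.mul_lt_mul_of_le_of_lt (le_refl _) (by omega) (by omega)
      calc fib l ^ k * (fib l ^ m - 1) < fib l ^ k * fib l ^ m := hlt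
      _ = fib l ^ t := by rw [← pow_add]
    exact lt_of_lt_of_le h1 (fib_pow_le l hl t)
  have hnup : n ≤ 2 + t * (l-1) := by
    by_contra hcon
    push_neg at hcon
    have : fib (t*(l-1)+1) ≤ fib n := Nat.fib_mono (by omega)
    omega
  exact ⟨hnlow, hnup⟩
end

section
/- Suppose positive integers n, l, k, m with l ≥ 3, m ≥ 2 satisfy F_n = F_l^k * (F_l^m - 1). Then 0 < 1 - φ^n * 5^(-1/2) * F_l^(-(k+m)) < 1.03 / F_l^m, where φ = (1+√5)/2. -/
open Real

open scoped goldenRatio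

/-
By Binet's formula φⁿ/√5 = F_n + ψⁿ/√5, so with P = F_l^k and Q = F_l^m the hypothesis
gives 1 - φⁿ/(√5 P Q) = (1 - ψⁿ/(√5 P)) / Q. The equation forces F_n ≥ 2 · 3, hence n ≥ 6,
and then |ψⁿ/√5| ≤ 0.62⁶/2 < 0.03, while P ≥ 1; so the numerator lies in (0, 1.03).
-/

lemma goldenRatio_pow_div_sqrt_five (n : ℕ) : φ ^ n / √5 = Nat.fib n + ψ ^ n / √5 := by
  rw [coe_fib_eq]
  ring

lemma abs_goldenConj_lt : |ψ| < 0.62 := by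
  have h5 : √5 < 2.24 := by
    rw [sqrt_lt' (by norm_num)]
    norm_num
  rw [abs_of_neg goldenConj_neg, goldenConj]
  linarith

lemma abs_goldenConj_pow_div_sqrt_five_lt {n : ℕ} (hn : 6 ≤ n) : |ψ ^ n / √5| < 0.03 := by
  have h5 : 2 < √5 := by
    rw [lt_sqrt (by norm_num)]
    norm_num
  have hpow : |ψ| ^ n ≤ 0.62 ^ 6 :=
    calc |ψ| ^ n ≤ |ψ| ^ 6 :=
          pow_le_pow_of_le_one (abs_nonneg _) (by linarith [abs_goldenConj_lt]) hn
      _ ≤ 0.62 ^ 6 := pow_le_pow_left₀ (abs_nonneg _) abs_goldenConj_lt.le 6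
  rw [abs_div, abs_pow, abs_of_pos (h5.trans' two_pos), div_lt_iff₀ (h5.trans' two_pos)]
  nlinarith

lemma six_le_of_six_le_fib {n : ℕ} (h : 6 ≤ Nat.fib n) : 6 ≤ n := by
  by_contra! hn
  have : Nat.fib n ≤ Nat.fib 5 := Nat.fib_mono (by omega)
  have : Nat.fib 5 = 5 := rfl
  omega

lemma one_sub_div_mul_bounds {P Q ε δ : ℝ} (hP : 1 ≤ P) (hQ : 0 < Q) (hε : |ε| < δ)
    (hδ : δ ≤ 1) :
    0 < 1 - (P * (Q - 1) + ε) / (P * Q) ∧ 1 - (P * (Q - 1) + ε) / (P * Q) < (1 + δ) / Q := by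
  have hP0 : 0 < P := by linarith
  have hform : 1 - (P * (Q - 1) + ε) / (P * Q) = (1 - ε / P) / Q := by
    field_simp
    ring
  obtain ⟨hε₁, hε₂⟩ := abs_lt.mp hε
  have hεP : |ε / P| < δ := by
    rw [abs_div, abs_of_pos hP0, div_lt_iff₀ hP0]
    nlinarith [abs_nonneg ε]
  obtain ⟨h₁, h₂⟩ := abs_lt.mp hεP
  rw [hform]
  exact ⟨div_pos (by linarith) hQ, div_lt_div_of_pos_right (by linarith) hQ⟩

theorem linear_form_bound_one_general (n l k m : ℕ)
    (hl : 3 ≤ l) (hk : 1 ≤ k) (hm : 2 ≤ m)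
    (heq : Nat.fib n = Nat.fib l ^ k * (Nat.fib l ^ m - 1)) :
    0 < 1 - goldenRatio ^ n * (Real.sqrt 5)⁻¹ * (Nat.fib l : ℝ) ^ (-((k : ℤ) + m)) ∧
      1 - goldenRatio ^ n * (Real.sqrt 5)⁻¹ * (Nat.fib l : ℝ) ^ (-((k : ℤ) + m)) <
        1.03 / (Nat.fib l : ℝ) ^ m := by
  have hF : 2 ≤ Nat.fib l := Nat.fib_mono hl
  have hP : 2 ≤ Nat.fib l ^ k := hF.trans (Nat.le_self_pow (by omega) _)
  have hQ : 4 ≤ Nat.fib l ^ m :=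
    (Nat.pow_le_pow_left hF 2).trans (Nat.pow_le_pow_right (by omega) hm)
  have hn : 6 ≤ n := six_le_of_six_le_fib (heq ▸ Nat.mul_le_mul hP (by omega : 3 ≤ _))
  have hfib : (Nat.fib n : ℝ) = (Nat.fib l : ℝ) ^ k * ((Nat.fib l : ℝ) ^ m - 1) := by
    rw [heq, Nat.cast_mul, Nat.cast_sub (by omega)]
    push_cast
    ring
  have hzpow : (Nat.fib l : ℝ) ^ (-((k : ℤ) + m)) =
      ((Nat.fib l : ℝ) ^ k * (Nat.fib l : ℝ) ^ m)⁻¹ := by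
    rw [← zpow_natCast, ← zpow_natCast, ← zpow_add₀ (by positivity), zpow_neg]
  have hexpr : goldenRatio ^ n * (Real.sqrt 5)⁻¹ * (Nat.fib l : ℝ) ^ (-((k : ℤ) + m)) =
      ((Nat.fib l : ℝ) ^ k * ((Nat.fib l : ℝ) ^ m - 1) + ψ ^ n / √5) /
        ((Nat.fib l : ℝ) ^ k * (Nat.fib l : ℝ) ^ m) := by
    rw [hzpow, ← hfib, ← goldenRatio_pow_div_sqrt_five]
    ring
  rw [hexpr, show (1.03 : ℝ) = 1 + 0.03 by norm_num]
  exact one_sub_div_mul_bounds (by exact_mod_cast hP.trans' (by norm_num)) (by positivity)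
    (abs_goldenConj_pow_div_sqrt_five_lt hn) (by norm_num)

theorem linear_form_bound_one (n l k m : ℕ)
    (hn : 1 ≤ n) (hl : 3 ≤ l) (hk : 1 ≤ k) (hm : 2 ≤ m)
    (heq : Nat.fib n = Nat.fib l ^ k * (Nat.fib l ^ m - 1)) :
    0 < 1 - goldenRatio ^ n * (Real.sqrt 5)⁻¹ * (Nat.fib l : ℝ) ^ (-((k : ℤ) + m)) ∧
      1 - goldenRatio ^ n * (Real.sqrt 5)⁻¹ * (Nat.fib l : ℝ) ^ (-((k : ℤ) + m)) <
        1.03 / (Nat.fib l : ℝ) ^ m :=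
  linear_form_bound_one_general n l k m hl hk hm heq
end

section
/- There is no even perfect number in the Fibonacci sequence; equivalently, there are no positive integers n and prime p with 2^p - 1 prime such that F_n = 2^(p-1) * (2^p - 1). -/
/-!
By Euler, an even perfect number is `2 ^ (p - 1) * (2 ^ p - 1)` with `p` prime. Modulo `48` such a
number is `6` (for `p = 2`), `28` (for `p = 3`) or `16` (for odd `p ≥ 5`, since then
`2 ^ (p - 1) ≡ 16` and `2 ^ p - 1 ≡ 31`). The Fibonacci numbers are `24`-periodic modulo `48`,
and none of `F_0, …, F_23` is congruent to `6`, `16` or `28`.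
-/

open ArithmeticFunction
open scoped ArithmeticFunction.sigma

namespace Nat

theorem sigma_one_two_pow (k : ℕ) : σ 1 (2 ^ k) = 2 ^ (k + 1) - 1 := by
  rw [sigma_one_apply_prime_pow prime_two, geomSum_eq le_rfl, Nat.div_one]

theorem eq_one_of_sum_properDivisors_mul_eq {a j : ℕ} (ha : a ≠ 1) (hj : j ≠ 0)
    (h : ∑ i ∈ (a * j).properDivisors, i = j) : j = 1 := by
  have hdvd : ∑ i ∈ (a * j).properDivisors, i ∣ a * j := by rw [h]; exact Dvd.intro_left a rfl
  rcases sum_properDivisors_dvd hdvd with h1 | hself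
  · exact h ▸ h1
  · have hj' : a * j = 1 * j := by rw [one_mul]; exact (h.symm.trans hself).symm
    exact absurd (mul_right_cancel₀ hj hj') ha

theorem Perfect.eq_two_pow_pred_mul_of_even {n : ℕ} (hperf : n.Perfect) (hev : Even n) :
    ∃ p, p.Prime ∧ (2 ^ p - 1).Prime ∧ n = 2 ^ (p - 1) * (2 ^ p - 1) := by
  obtain ⟨k, m, hm, rfl⟩ := exists_eq_two_pow_mul_odd hperf.2.ne'
  have hk : k ≠ 0 := by
    rintro rfl
    exact not_even_iff_odd.2 hm (by simpa using hev)
  set M := 2 ^ (k + 1) - 1 with hM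
  have hsucc : 2 ^ (k + 1) = M + 1 := by have := Nat.one_le_two_pow (n := k + 1); omega
  have hM1 : 1 < M := by
    have : 2 ^ 2 ≤ 2 ^ (k + 1) := pow_le_pow_right₀ one_le_two (by omega)
    omega
  have hσ : M * σ 1 m = 2 ^ (k + 1) * m := by
    have h := (perfect_iff_sum_divisors_eq_two_mul hperf.2).1 hperf
    rwa [← sigma_one_apply, isMultiplicative_sigma.map_mul_of_coprime
      ((Nat.coprime_two_left.2 hm).pow_left k), sigma_one_two_pow, ← mul_assoc, ← pow_succ'] at h
  have hcop : Coprime M (2 ^ (k + 1)) := by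
    rw [hsucc, coprime_self_add_right]
    exact coprime_one_right M
  obtain ⟨j, rfl⟩ := hcop.dvd_of_dvd_mul_left (Dvd.intro _ hσ)
  have hj : j ≠ 0 := by rintro rfl; simp at hm
  -- `σ (M j) = 2 ^ (k + 1) j = M j + j`, so `j` is the sum of the proper divisors of `M j`.
  have hproper : ∑ i ∈ (M * j).properDivisors, i = j := by
    rw [mul_left_comm, hsucc, add_mul, one_mul] at hσ
    have := mul_left_cancel₀ (by omega : M ≠ 0) hσ
    rw [sigma_one_apply, sum_divisors_eq_sum_properDivisors_add_self] at this
    omega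
  obtain rfl := eq_one_of_sum_properDivisors_mul_eq hM1.ne' hj hproper
  rw [mul_one, sum_properDivisors_eq_one_iff_prime] at hproper
  refine ⟨k + 1, prime_of_pow_sub_one_prime (by omega) hproper |>.2, hproper, ?_⟩
  simp [hM]

theorem fib_add_twenty_four_modEq (n : ℕ) : fib (n + 24) ≡ fib n [MOD 48] := by
  calc fib (n + 24) = fib n * fib 23 + fib (n + 1) * fib 24 := fib_add n 23
    _ ≡ fib n * 1 + fib (n + 1) * 0 [MOD 48] :=
        ((ModEq.refl _).mul (by decide)).add ((ModEq.refl _).mul (by decide))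
    _ = fib n := by ring

theorem fib_add_mul_twenty_four_modEq (r q : ℕ) : fib (r + 24 * q) ≡ fib r [MOD 48] := by
  induction q with
  | zero => rfl
  | succ q ih => exact (fib_add_twenty_four_modEq (r + 24 * q)).trans ih

theorem fib_mod_forty_eight_notMem (n : ℕ) : fib n % 48 ∉ ({6, 16, 28} : Finset ℕ) := by
  have hsmall : ∀ r < 24, fib r % 48 ∉ ({6, 16, 28} : Finset ℕ) := by decide
  rw [← mod_add_div n 24, fib_add_mul_twenty_four_modEq]
  exact hsmall _ (mod_lt n (by norm_num))

theorem two_pow_pred_mul_mod_forty_eight_mem {p : ℕ} (hp : p.Prime) :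
    2 ^ (p - 1) * (2 ^ p - 1) % 48 ∈ ({6, 16, 28} : Finset ℕ) := by
  obtain rfl | hp2 := hp.eq_two_or_odd'
  · decide
  obtain rfl | hp3 := eq_or_ne p 3
  · decide
  obtain ⟨m, rfl⟩ : ∃ m, p = 2 * m + 5 := by
    obtain ⟨t, rfl⟩ := hp2
    have : t ≠ 0 := by rintro rfl; exact not_prime_one hp
    exact ⟨t - 2, by omega⟩
  have hpow : 2 ^ (2 * m + 4) % 48 = 16 := by
    have h : 4 ^ m ≡ 1 [MOD 3] := by simpa using (show 4 ≡ 1 [MOD 3] by decide).pow m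
    have h16 := h.mul_left' 16
    rw [pow_add, pow_mul]
    simpa [mul_comm, ModEq] using h16
  rw [show 2 * m + 5 - 1 = 2 * m + 4 by omega, pow_succ 2 (2 * m + 4), Nat.mul_mod, hpow]
  have : (2 ^ (2 * m + 4) * 2 - 1) % 48 = 31 := by omega
  rw [this]
  decide

theorem fib_ne_two_pow_pred_mul {p : ℕ} (hp : p.Prime) (n : ℕ) :
    fib n ≠ 2 ^ (p - 1) * (2 ^ p - 1) := fun h =>
  fib_mod_forty_eight_notMem n (h ▸ two_pow_pred_mul_mod_forty_eight_mem hp)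

end Nat

theorem no_even_perfect_fib :
    (¬ ∃ n : ℕ, 0 < n ∧ Even (Nat.fib n) ∧ Nat.Perfect (Nat.fib n)) ∧
      ¬ ∃ n p : ℕ, 0 < n ∧ p.Prime ∧ (2 ^ p - 1).Prime ∧
        Nat.fib n = 2 ^ (p - 1) * (2 ^ p - 1) := by
  refine ⟨?_, fun ⟨n, p, _, hp, _, h⟩ => Nat.fib_ne_two_pow_pred_mul hp n h⟩
  rintro ⟨n, -, hev, hperf⟩
  obtain ⟨p, hp, -, h⟩ := hperf.eq_two_pow_pred_mul_of_even hev
  exact Nat.fib_ne_two_pow_pred_mul hp n h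
end

section
/- Suppose positive integers n, l, k, m with l ≥ 3, m ≥ 2 satisfy F_n = F_l^k * (F_l^m - 1), and let Γ = n log(φ) - (k+m) log(F_l) - log(√5). Then Γ < 0 and 0 < -Γ < 2.06 / F_l^m ≤ 1.03 / 2^(m-1). -/
/-!
By Binet's formula `φ ^ n / √5` lies within `1 / 2` of `F_n = q (P - 1)`, where `q = F_l ^ k ≥ 2`
and `P = F_l ^ m ≥ 4`, so `Γ = log (φ ^ n / √5) - log (q P)` is negative. Since
`qP - φ ^ n / √5 ≤ q + 1 / 2` is small compared with `φ ^ n / √5 ≥ q (P - 1) - 1 / 2`,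
`log x ≤ x - 1` gives `-Γ < 2.06 / P`.
-/

open Real
open scoped goldenRatio

lemma abs_goldenConj_pow_div_sqrt_five_le (n : ℕ) : |ψ ^ n / √5| ≤ 1 / 2 := by
  have hψ : |ψ| ≤ 1 := abs_le.mpr ⟨neg_one_lt_goldenConj.le, goldenConj_neg.le.trans zero_le_one⟩
  have hψn : |ψ| ^ n ≤ 1 := pow_le_one₀ (abs_nonneg _) hψ
  have h5 : 2 ≤ √5 := (le_sqrt' two_pos).mpr (by norm_num)
  rw [abs_div, abs_pow, abs_of_pos (by positivity : (0 : ℝ) < √5), div_le_iff₀ (by positivity)]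
  linarith

lemma abs_goldenRatio_pow_div_sqrt_five_sub_fib_le (n : ℕ) :
    |φ ^ n / √5 - Nat.fib n| ≤ 1 / 2 := by
  rw [coe_fib_eq, ← sub_div, sub_sub_cancel]
  exact abs_goldenConj_pow_div_sqrt_five_le n

lemma log_mul_sub_log_mem_Ioo {q P A : ℝ} (hq : 2 ≤ q) (hP : 4 ≤ P)
    (hA : |A - q * (P - 1)| ≤ 1 / 2) :
    0 < log (q * P) - log A ∧ log (q * P) - log A < 2.06 / P := by
  obtain ⟨hA₁, hA₂⟩ := abs_le.mp hA
  have hApos : 0 < A := by nlinarith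
  have hAlt : A < q * P := by nlinarith
  refine ⟨sub_pos.mpr (log_lt_log hApos hAlt), ?_⟩
  have hgap : (q * P - A) * P < 2.06 * A := by
    nlinarith [mul_le_mul_of_nonneg_right hA₁ (by linarith : 0 ≤ P),
      mul_nonneg (by linarith : 0 ≤ q - 2) (by linarith : 0 ≤ P - 4)]
  have hratio : q * P / A < 1 + 2.06 / P := by
    rw [div_lt_iff₀ hApos, add_mul, one_mul, div_mul_eq_mul_div, ← sub_lt_iff_lt_add',
      lt_div_iff₀ (by positivity)]
    exact hgap
  rw [← log_div (by positivity) hApos.ne']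
  linarith [log_le_sub_one_of_pos (show 0 < q * P / A by positivity)]

lemma div_pow_le_half_div_two_pow_pred {c x : ℝ} (hc : 0 ≤ c) (hx : 2 ≤ x) {m : ℕ}
    (hm : 1 ≤ m) : c / x ^ m ≤ c / 2 / 2 ^ (m - 1) := by
  rw [div_div, ← pow_succ', Nat.sub_add_cancel hm]
  exact div_le_div_of_nonneg_left hc (by positivity) (pow_le_pow_left₀ zero_le_two hx m)

theorem gamma_bounds_general (n l k m : ℕ)
    (hl : 3 ≤ l) (hk : 1 ≤ k) (hm : 2 ≤ m)
    (heq : Nat.fib n = Nat.fib l ^ k * (Nat.fib l ^ m - 1)) :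
    (n : ℝ) * Real.log goldenRatio - ((k : ℝ) + m) * Real.log (Nat.fib l) -
        Real.log (Real.sqrt 5) < 0 ∧
      0 < -((n : ℝ) * Real.log goldenRatio - ((k : ℝ) + m) * Real.log (Nat.fib l) -
        Real.log (Real.sqrt 5)) ∧
      -((n : ℝ) * Real.log goldenRatio - ((k : ℝ) + m) * Real.log (Nat.fib l) -
        Real.log (Real.sqrt 5)) < 2.06 / (Nat.fib l : ℝ) ^ m ∧
      2.06 / (Nat.fib l : ℝ) ^ m ≤ 1.03 / 2 ^ (m - 1) := by
  have hF : (2 : ℝ) ≤ Nat.fib l := by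
    have : 2 ≤ Nat.fib l := Nat.fib_mono hl
    exact_mod_cast this
  set F : ℝ := (Nat.fib l : ℝ)
  have hq : 2 ≤ F ^ k := hF.trans (le_self_pow₀ (by linarith) (by omega))
  have hP : 4 ≤ F ^ m := calc
    (4 : ℝ) = 2 ^ 2 := by norm_num
    _ ≤ 2 ^ m := pow_le_pow_right₀ one_le_two hm
    _ ≤ F ^ m := pow_le_pow_left₀ zero_le_two hF m
  have hfib : (Nat.fib n : ℝ) = F ^ k * (F ^ m - 1) := by
    rw [heq, Nat.cast_mul, Nat.cast_sub (Nat.one_le_pow _ _ (Nat.fib_pos.mpr (by omega)))]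
    push_cast; rfl
  have hA := abs_goldenRatio_pow_div_sqrt_five_sub_fib_le n
  rw [hfib] at hA
  have hΓ : (n : ℝ) * log φ - ((k : ℝ) + m) * log F - log √5 =
      log (φ ^ n / √5) - log (F ^ k * F ^ m) := by
    rw [log_div (x := φ ^ n) (by positivity) (by positivity), ← pow_add, log_pow, log_pow]
    push_cast; ring
  obtain ⟨hpos, hlt⟩ := log_mul_sub_log_mem_Ioo hq hP hA
  rw [hΓ]
  refine ⟨by linarith, by linarith, by linarith, ?_⟩
  calc 2.06 / F ^ m ≤ 2.06 / 2 / 2 ^ (m - 1) :=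
        div_pow_le_half_div_two_pow_pred (by norm_num) hF (by omega)
    _ = 1.03 / 2 ^ (m - 1) := by norm_num

theorem gamma_bounds (n l k m : ℕ)
    (hn : 1 ≤ n) (hl : 3 ≤ l) (hk : 1 ≤ k) (hm : 2 ≤ m)
    (heq : Nat.fib n = Nat.fib l ^ k * (Nat.fib l ^ m - 1)) :
    (n : ℝ) * Real.log goldenRatio - ((k : ℝ) + m) * Real.log (Nat.fib l) -
        Real.log (Real.sqrt 5) < 0 ∧
      0 < -((n : ℝ) * Real.log goldenRatio - ((k : ℝ) + m) * Real.log (Nat.fib l) -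
        Real.log (Real.sqrt 5)) ∧
      -((n : ℝ) * Real.log goldenRatio - ((k : ℝ) + m) * Real.log (Nat.fib l) -
        Real.log (Real.sqrt 5)) < 2.06 / (Nat.fib l : ℝ) ^ m ∧
      2.06 / (Nat.fib l : ℝ) ^ m ≤ 1.03 / 2 ^ (m - 1) :=
  gamma_bounds_general n l k m hl hk hm heq
end
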